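/- arXiv:2001.07235 — 4 statements merged into one kernel-verified Lean document; each statement's English description precedes it below -/
import Mathlib

section
/- Let m ≥ 2, let α ∈ ℝ^m_+ satisfy ∏_{k=1}^m α_k = 1, let λ_* > 0, and define H : ℝ^m_+ → ℝ by H(λ_1,…,λ_m) = λ_1 · λ_2^{α_1} ⋯ λ_m^{α_1⋯α_{m−1}}, and Λ_1 = {λ ∈ ℝ^m_+ : H(λ) = λ_*}. Define θ_* : ℝ^{m−1}_+ → (0,∞) by θ_*(σ) = ( λ_* / ∏_{i=1}^{m−1} σ_i^{∏_{k=1}^{i} α_k} )^{ 1 / ∑_{i=1}^{m} ∏_{k=1}^{i} α_k }. Then the map Φ : ℝ^{m−1}_+ → ℝ^m_+, Φ(σ) = (θ_*(σ), θ_*(σ)σ_1, …, θ_*(σ)σ_{m−1}), is continuous and is a bijection from ℝ^{m−1}_+ onto Λ_1. -/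
/-- With `m = n + 1 ≥ 2`, `α ∈ ℝ^m_+` with `∏ α = 1`, `λ_* > 0`,
`H(λ) = λ₁ · λ₂^{α₁} ⋯ λ_m^{α₁⋯α_{m-1}}`, `Λ₁ = {λ ∈ ℝ^m_+ : H(λ) = λ_*}` and
`θ_*(σ)` given by the explicit formula, the map
`Φ(σ) = (θ_*(σ), θ_*(σ)σ₁, …, θ_*(σ)σ_{m-1})` is continuous on `ℝ^{m-1}_+`
and is a bijection from `ℝ^{m-1}_+` onto `Λ₁`. -/
theorem principal_hypersurface_parametrization_bijective
    (n : ℕ) (hn : 1 ≤ n)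
    (α : Fin (n + 1) → ℝ) (hα : ∀ k, 0 < α k) (hprod : ∏ k, α k = 1)
    (lamstar : ℝ) (hlam : 0 < lamstar)
    (H : (Fin (n + 1) → ℝ) → ℝ)
    (hH : ∀ lam, H lam = ∏ i, lam i ^ (∏ k ∈ Finset.Iio i, α k))
    (Λ₁ : Set (Fin (n + 1) → ℝ))
    (hΛ₁ : Λ₁ = {lam | (∀ i, 0 < lam i) ∧ H lam = lamstar})
    (θ : (Fin n → ℝ) → ℝ)
    (hθ : ∀ σ, θ σ =
      (lamstar / ∏ i : Fin n, σ i ^ (∏ k ∈ Finset.Iic i.castSucc, α k)) ^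
        (1 / ∑ i : Fin (n + 1), ∏ k ∈ Finset.Iic i, α k))
    (Φ : (Fin n → ℝ) → (Fin (n + 1) → ℝ))
    (hΦ : ∀ σ, Φ σ = Fin.cons (θ σ) (fun i => θ σ * σ i)) :
    ContinuousOn Φ {σ | ∀ i, 0 < σ i} ∧
    Set.BijOn Φ {σ | ∀ i, 0 < σ i} Λ₁ := by
  classical
  set e : Fin (n + 1) → ℝ := fun i => ∏ k ∈ Finset.Iio i, α k with he
  have he_pos : ∀ i, 0 < e i := fun i => Finset.prod_pos fun k _ => hα k
  set c : Fin n → ℝ := fun i => ∏ k ∈ Finset.Iic i.castSucc, α k with hc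
  have hce : ∀ i : Fin n, c i = e i.succ := by
    intro i
    have h : Finset.Iic i.castSucc = Finset.Iio i.succ := by
      ext j; simp [Fin.lt_iff_val_lt_val, Fin.le_iff_val_le_val]
    simp only [hc, he, h]
  have hc_pos : ∀ i, 0 < c i := fun i => Finset.prod_pos fun k _ => hα k
  set S : ℝ := ∑ i, e i with hS
  have hS_pos : 0 < S := Finset.sum_pos (fun i _ => he_pos i) Finset.univ_nonempty
  have hIio0 : Finset.Iio (0 : Fin (n + 1)) = ∅ := by
    simp [Finset.eq_empty_iff_forall_notMem]
  have he0 : e 0 = 1 := by simp [he, hIio0]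
  have hIiclast : Finset.Iic (Fin.last n) = Finset.univ := by
    ext j; simp [Fin.le_last]
  have hsplit : S = 1 + ∑ i : Fin n, c i := by
    rw [hS, Fin.sum_univ_succ, he0]
    congr 1
  have hSsum : (∑ i : Fin (n + 1), ∏ k ∈ Finset.Iic i, α k) = S := by
    rw [Fin.sum_univ_castSucc, hIiclast, hprod, hsplit]
    have : ∑ i : Fin n, ∏ k ∈ Finset.Iic i.castSucc, α k = ∑ i : Fin n, c i :=
      Finset.sum_congr rfl fun i _ => rfl
    rw [this]; ring
  set P : (Fin n → ℝ) → ℝ := fun σ => ∏ i, σ i ^ c i with hP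
  have hP_pos : ∀ σ : Fin n → ℝ, (∀ i, 0 < σ i) → 0 < P σ := fun σ hσ =>
    Finset.prod_pos fun i _ => Real.rpow_pos_of_pos (hσ i) _
  have hθ' : ∀ σ, θ σ = (lamstar / P σ) ^ (1 / S) := by
    intro σ; rw [hθ σ, hSsum]
  have hθ_pos : ∀ σ : Fin n → ℝ, (∀ i, 0 < σ i) → 0 < θ σ := fun σ hσ => by
    rw [hθ' σ]; exact Real.rpow_pos_of_pos (div_pos hlam (hP_pos σ hσ)) _
  have hθS : ∀ σ : Fin n → ℝ, (∀ i, 0 < σ i) → θ σ ^ S = lamstar / P σ := by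
    intro σ hσ
    rw [hθ' σ, ← Real.rpow_mul (div_pos hlam (hP_pos σ hσ)).le, one_div,
      inv_mul_cancel₀ hS_pos.ne', Real.rpow_one]
  -- the key identity `H (Φ σ) = lamstar`
  have hHΦ : ∀ σ : Fin n → ℝ, (∀ i, 0 < σ i) → H (Φ σ) = lamstar := by
    intro σ hσ
    have hθp := hθ_pos σ hσ
    rw [hH, hΦ, Fin.prod_univ_succ]
    simp only [Fin.cons_zero, Fin.cons_succ]
    have hmain : ∏ i : Fin n, (θ σ * σ i) ^ (∏ k ∈ Finset.Iio (i.succ : Fin (n + 1)), α k)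
        = θ σ ^ (∑ i : Fin n, c i) * P σ := by
      calc ∏ i : Fin n, (θ σ * σ i) ^ (∏ k ∈ Finset.Iio (i.succ : Fin (n + 1)), α k)
          = ∏ i : Fin n, (θ σ ^ c i * σ i ^ c i) := by
            refine Finset.prod_congr rfl fun i _ => ?_
            rw [show (∏ k ∈ Finset.Iio (i.succ : Fin (n + 1)), α k) = c i from (hce i).symm,
              Real.mul_rpow hθp.le (hσ i).le]
        _ = (∏ i : Fin n, θ σ ^ c i) * ∏ i : Fin n, σ i ^ c i := Finset.prod_mul_distrib
        _ = θ σ ^ (∑ i : Fin n, c i) * P σ := by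
            rw [← Real.rpow_sum_of_pos hθp]
    rw [show (∏ k ∈ Finset.Iio (0 : Fin (n + 1)), α k) = 1 from he0, Real.rpow_one, hmain,
      ← mul_assoc, show θ σ * θ σ ^ (∑ i : Fin n, c i) = θ σ ^ S by
        rw [hsplit, Real.rpow_add hθp, Real.rpow_one],
      hθS σ hσ, div_mul_cancel₀ _ (hP_pos σ hσ).ne']
  have hΦ0 : ∀ σ : Fin n → ℝ, Φ σ 0 = θ σ := fun σ => by rw [hΦ]; simp
  have hΦs : ∀ (σ : Fin n → ℝ) (i : Fin n), Φ σ i.succ = θ σ * σ i := fun σ i => by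
    rw [hΦ]; simp
  constructor
  · -- continuity
    have hPcont : ContinuousOn P {σ : Fin n → ℝ | ∀ i, 0 < σ i} := by
      apply continuousOn_finset_prod
      intro i _
      exact (continuous_apply i).continuousOn.rpow_const fun σ hσ => Or.inl (hσ i).ne'
    have hθcont : ContinuousOn θ {σ : Fin n → ℝ | ∀ i, 0 < σ i} := by
      refine ContinuousOn.congr (f := fun σ => (lamstar / P σ) ^ (1 / S)) ?_ fun σ _ => hθ' σ
      exact (continuousOn_const.div hPcont fun σ hσ => (hP_pos σ hσ).ne').rpow_const
        fun σ hσ => Or.inl (div_pos hlam (hP_pos σ hσ)).ne'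
    have hΦeq : Φ = fun σ => Fin.cons (θ σ) (fun i => θ σ * σ i) := funext hΦ
    rw [hΦeq, continuousOn_pi]
    intro i
    induction i using Fin.cases with
    | zero => simpa using hθcont
    | succ i =>
      simp only [Fin.cons_succ]
      exact hθcont.mul (continuous_apply i).continuousOn
  · refine ⟨?_, ?_, ?_⟩
    · -- maps to
      intro σ hσ
      rw [hΛ₁]
      refine ⟨?_, hHΦ σ hσ⟩
      intro i
      induction i using Fin.cases with
      | zero => rw [hΦ0]; exact hθ_pos σ hσ
      | succ i => rw [hΦs]; exact mul_pos (hθ_pos σ hσ) (hσ i)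
    · -- injective
      intro σ1 h1 σ2 h2 heq
      have hθeq : θ σ1 = θ σ2 := by
        rw [← hΦ0, ← hΦ0, heq]
      funext i
      have := congrFun heq i.succ
      rw [hΦs, hΦs, hθeq] at this
      exact mul_left_cancel₀ (hθ_pos σ2 h2).ne' this
    · -- surjective
      intro lam hmem
      rw [hΛ₁] at hmem
      obtain ⟨hpos, hHeq⟩ := hmem
      set σ : Fin n → ℝ := fun i => lam i.succ / lam 0 with hσdef
      have hσpos : ∀ i, 0 < σ i := fun i => div_pos (hpos i.succ) (hpos 0)
      have hQ : ∏ i : Fin n, lam i.succ ^ c i = lamstar / lam 0 := by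
        have : lamstar = lam 0 * ∏ i : Fin n, lam i.succ ^ c i := by
          rw [← hHeq, hH, Fin.prod_univ_succ,
            show (∏ k ∈ Finset.Iio (0 : Fin (n + 1)), α k) = 1 from he0, Real.rpow_one]
          congr 1
        rw [this]
        exact (mul_div_cancel_left₀ _ (hpos 0).ne').symm
      have hPσ : P σ = (lamstar / lam 0) / lam 0 ^ (∑ i : Fin n, c i) := by
        rw [← hQ, show P σ = ∏ i : Fin n, σ i ^ c i from rfl,
          Real.rpow_sum_of_pos (hpos 0), ← Finset.prod_div_distrib]
        refine Finset.prod_congr rfl fun i _ => ?_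
        exact Real.div_rpow (hpos i.succ).le (hpos 0).le _
      have hlp : (0:ℝ) < lam 0 ^ (∑ i : Fin n, c i) := Real.rpow_pos_of_pos (hpos 0) _
      have hkey : lamstar / P σ = lam 0 ^ S := by
        rw [hPσ, hsplit, Real.rpow_add (hpos 0), Real.rpow_one]
        field_simp
      have hθσ : θ σ = lam 0 := by
        rw [hθ' σ, hkey, ← Real.rpow_mul (hpos 0).le, mul_one_div, div_self hS_pos.ne',
          Real.rpow_one]
      refine ⟨σ, hσpos, ?_⟩
      funext i
      induction i using Fin.cases with
      | zero => rw [hΦ0, hθσ]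
      | succ i =>
        rw [hΦs, hθσ]
        simp only [hσdef]
        rw [mul_comm, div_mul_cancel₀ _ (hpos 0).ne']
end

section
/- Let Ω ⊂ ℝ^n (n ≥ 2) be a bounded open set and let F = (f_1,…,f_m) : Ω × ℝ^m → ℝ^m satisfy: F(x,·) is continuous for a.e. x ∈ Ω; F(·,t) ∈ L^n(Ω;ℝ^m) for every t ∈ ℝ^m; (A) F(x,0) > 0 componentwise for a.e. x ∈ Ω; (B) F(x,s) ≤ F(x,t) componentwise for a.e. x ∈ Ω whenever 0 ≤ s ≤ t in ℝ^m; (C) there exist ρ ∈ L^n(Ω;ℝ^m) with ρ(x) > 0 componentwise a.e. and α ∈ ℝ^m_+ with ∏_{k=1}^m α_k = 1 such that for every κ > 0 there is M > 0 with F(x,t) ≥ κ ρ(x) S_α(t) componentwise for a.e. x ∈ Ω and all t ∈ ℝ^m_+ with |t| > M. Then there exist a map ρ_0 ∈ L^n(Ω;ℝ^m) with ρ_0(x) > 0 componentwise a.e., a tuple α ∈ ℝ^m_+ with ∏_{k=1}^m α_k = 1, and a constant C_0 > 0 such that C_0 F(x,t) ≥ ρ_0(x) S_α(t) componentwise for a.e.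 x ∈ Ω and all t ∈ ℝ^m_+. -/
open MeasureTheory

/-- The nonlinear shift `S_γ(a) = (|a₂|^{γ₁-1}a₂, …, |a_m|^{γ_{m-1}-1}a_m,
|a₁|^{γ_m-1}a₁)`, written with cyclic indexing in `Fin m`. -/
noncomputable def nonlinearShift {m : ℕ} [NeZero m] (γ a : Fin m → ℝ) : Fin m → ℝ :=
  fun i => |a (i + 1)| ^ (γ i - 1) * a (i + 1)

/-- Lemma 3.2 of the paper. If `F : Ω × ℝ^m → ℝ^m` satisfies the
regularity conditions and (A), (B), (C), then there are a positive map
`ρ₀ ∈ Lⁿ(Ω;ℝ^m)`, a tuple `α ∈ ℝ^m_+` with `∏ α = 1` and a constant `C₀ > 0`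
such that `C₀ F(x,t) ≥ ρ₀(x) S_α(t)` for a.e. `x ∈ Ω` and all `t ∈ ℝ^m_+`. -/
theorem global_lower_bound_by_shift
    (n m : ℕ) (hn : 2 ≤ n) (hm : 1 ≤ m) [NeZero m]
    (Ω : Set (Fin n → ℝ)) (hΩo : IsOpen Ω) (hΩb : Bornology.IsBounded Ω)
    (F : (Fin n → ℝ) → (Fin m → ℝ) → (Fin m → ℝ))
    (hFcont : ∀ᵐ x ∂(volume.restrict Ω), Continuous (F x))
    (hFLn : ∀ t : Fin m → ℝ, ∀ i, MemLp (fun x => F x t i) n (volume.restrict Ω))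
    -- (A): F is positive at the origin
    (hA : ∀ᵐ x ∂(volume.restrict Ω), ∀ i, 0 < F x 0 i)
    -- (B): F is nondecreasing
    (hB : ∀ᵐ x ∂(volume.restrict Ω), ∀ s t : Fin m → ℝ,
      (∀ i, 0 ≤ s i) → (∀ i, s i ≤ t i) → ∀ i, F x s i ≤ F x t i)
    -- (C): F is "nonlinearly superlinear coupled" at infinity
    (hC : ∃ ρ : (Fin n → ℝ) → Fin m → ℝ, ∃ α : Fin m → ℝ,
      (∀ i, MemLp (fun x => ρ x i) n (volume.restrict Ω)) ∧
      (∀ᵐ x ∂(volume.restrict Ω), ∀ i, 0 < ρ x i) ∧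
      (∀ i, 0 < α i) ∧ (∏ k, α k = 1) ∧
      ∀ κ : ℝ, 0 < κ → ∃ M : ℝ, 0 < M ∧
        ∀ᵐ x ∂(volume.restrict Ω), ∀ t : Fin m → ℝ,
          (∀ i, 0 < t i) → M < ‖t‖ →
            ∀ i, κ * (ρ x i * nonlinearShift α t i) ≤ F x t i) :
    ∃ ρ₀ : (Fin n → ℝ) → Fin m → ℝ, ∃ α : Fin m → ℝ, ∃ C₀ : ℝ,
      (∀ i, MemLp (fun x => ρ₀ x i) n (volume.restrict Ω)) ∧
      (∀ᵐ x ∂(volume.restrict Ω), ∀ i, 0 < ρ₀ x i) ∧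
      (∀ i, 0 < α i) ∧ (∏ k, α k = 1) ∧ 0 < C₀ ∧
      ∀ᵐ x ∂(volume.restrict Ω), ∀ t : Fin m → ℝ, (∀ i, 0 < t i) →
        ∀ i, ρ₀ x i * nonlinearShift α t i ≤ C₀ * F x t i := by
  obtain ⟨ρ, α, hρLn, hρpos, hαpos, hαprod, hCbound⟩ := hC
  obtain ⟨M, hM, hMae⟩ := hCbound 1 one_pos
  set K : Fin m → ℝ := fun i => max 1 (M ^ α i) with hK
  have hKpos : ∀ i, 0 < K i := fun i => lt_of_lt_of_le one_pos (le_max_left _ _)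
  refine ⟨fun x i => min (ρ x i) ((K i)⁻¹ * F x 0 i), α, 1, ?_, ?_, hαpos, hαprod,
    one_pos, ?_⟩
  · intro i
    have h1 := hρLn i
    have h2 := (hFLn 0 i).const_mul (K i)⁻¹
    exact h1.inf h2
  · filter_upwards [hρpos, hA] with x h1 h2 i
    exact lt_min (h1 i) (mul_pos (inv_pos.mpr (hKpos i)) (h2 i))
  · filter_upwards [hρpos, hA, hB, hMae] with x h1 h2 h3 h4 t ht i
    have htpos : (0:ℝ) < t (i + 1) := ht (i + 1)
    have hS : nonlinearShift α t i = t (i + 1) ^ α i := by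
      simp only [nonlinearShift, abs_of_pos htpos]
      rw [Real.rpow_sub htpos, Real.rpow_one, div_mul_cancel₀ _ htpos.ne']
    have hSpos : 0 < nonlinearShift α t i := by
      rw [hS]; exact Real.rpow_pos_of_pos htpos _
    rw [one_mul]
    by_cases hnorm : M < ‖t‖
    · calc min (ρ x i) ((K i)⁻¹ * F x 0 i) * nonlinearShift α t i
          ≤ ρ x i * nonlinearShift α t i :=
            mul_le_mul_of_nonneg_right (min_le_left _ _) hSpos.le
        _ ≤ F x t i := by have := h4 t ht hnorm i; linarith
    · push_neg at hnorm
      have htle : t (i + 1) ≤ M := le_trans (le_trans (le_abs_self _)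
        (norm_le_pi_norm t (i + 1))) hnorm
      have hSle : nonlinearShift α t i ≤ K i := by
        rw [hS]
        refine le_trans ?_ (le_max_right 1 (M ^ α i))
        exact Real.rpow_le_rpow htpos.le htle (hαpos i).le
      calc min (ρ x i) ((K i)⁻¹ * F x 0 i) * nonlinearShift α t i
          ≤ (K i)⁻¹ * F x 0 i * nonlinearShift α t i :=
            mul_le_mul_of_nonneg_right (min_le_right _ _) hSpos.le
        _ ≤ (K i)⁻¹ * F x 0 i * K i := by
            refine mul_le_mul_of_nonneg_left hSle ?_
            exact mul_nonneg (inv_pos.mpr (hKpos i)).le (h2 i).le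
        _ = F x 0 i := by have := (hKpos i).ne'; field_simp
        _ ≤ F x t i := h3 0 t (fun _ => le_refl 0) (fun j => (ht j).le) i
end

section
/- Let m ≥ 2 and let S ⊆ ℝ^m_+ be downward closed, i.e. if Λ ∈ S and Λ' ∈ ℝ^m_+ satisfies Λ'_i < Λ_i for all i, then Λ' ∈ S. For σ ∈ ℝ^{m−1}_+ set T_σ = {λ > 0 : (λ, λσ_1, …, λσ_{m−1}) ∈ S}, and assume T_σ is nonempty and bounded above for every σ; let λ*(σ) = sup T_σ. Then the function λ* : ℝ^{m−1}_+ → (0,∞) is continuous. -/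
/-- abstract form of Proposition 4.1 of the paper.
Let `S ⊆ ℝ^m_+` (`m = n + 1 ≥ 2`) be downward closed. For `σ ∈ ℝ^{m-1}_+` let
`T_σ = {λ > 0 : (λ, λσ) ∈ S}` and assume `T_σ` is nonempty and bounded above
for every positive `σ`; set `λ*(σ) = sup T_σ`. Then `λ*` is continuous on
`ℝ^{m-1}_+`. -/
theorem extremal_parameter_continuous
    (n : ℕ) (hn : 1 ≤ n)
    (S : Set (Fin (n + 1) → ℝ))
    (hSpos : ∀ Λ ∈ S, ∀ i, 0 < Λ i)
    (hdown : ∀ Λ ∈ S, ∀ Λ' : Fin (n + 1) → ℝ,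
      (∀ i, 0 < Λ' i) → (∀ i, Λ' i < Λ i) → Λ' ∈ S)
    (T : (Fin n → ℝ) → Set ℝ)
    (hT : ∀ σ, T σ = {lam : ℝ | 0 < lam ∧ Fin.cons lam (fun i => lam * σ i) ∈ S})
    (hTne : ∀ σ : Fin n → ℝ, (∀ i, 0 < σ i) → (T σ).Nonempty)
    (hTbdd : ∀ σ : Fin n → ℝ, (∀ i, 0 < σ i) → BddAbove (T σ))
    (lamstar : (Fin n → ℝ) → ℝ)
    (hls : ∀ σ, lamstar σ = sSup (T σ)) :
    ContinuousOn lamstar {σ | ∀ i, 0 < σ i} := by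
  -- Key monotonicity/scaling lemma
  have key : ∀ σ σ' : Fin n → ℝ, (∀ i, 0 < σ i) → (∀ i, 0 < σ' i) →
      ∀ t : ℝ, 0 < t → t < 1 → (∀ i, t * σ' i < σ i) →
      t * lamstar σ ≤ lamstar σ' := by
    intro σ σ' hσ hσ' t ht0 ht1 hlt
    rw [hls, hls, mul_comm, ← le_div_iff₀ ht0]
    apply csSup_le (hTne σ hσ)
    intro lam hlam
    rw [le_div_iff₀ ht0]
    apply le_csSup (hTbdd σ' hσ')
    rw [hT] at hlam ⊢
    obtain ⟨hlam0, hmem⟩ := hlam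
    refine ⟨mul_pos hlam0 ht0, ?_⟩
    apply hdown _ hmem
    · intro i
      refine Fin.cases ?_ ?_ i
      · simpa using mul_pos hlam0 ht0
      · intro j
        simp only [Fin.cons_succ]
        exact mul_pos (mul_pos hlam0 ht0) (hσ' j)
    · intro i
      refine Fin.cases ?_ ?_ i
      · simp only [Fin.cons_zero]
        nlinarith
      · intro j
        simp only [Fin.cons_succ]
        have h := mul_lt_mul_of_pos_left (hlt j) hlam0
        calc lam * t * σ' j = lam * (t * σ' j) := by ring
          _ < lam * σ j := h
  rw [Metric.continuousOn_iff]
  intro σ₀ hσ₀ ε hε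
  have hσ₀' : ∀ i, 0 < σ₀ i := hσ₀
  set L := lamstar σ₀ with hLdef
  have hLpos : 0 < L := by
    obtain ⟨lam, hlam⟩ := hTne σ₀ hσ₀'
    have hlam0 : 0 < lam := by
      rw [hT] at hlam; exact hlam.1
    have hle : lam ≤ L := by
      rw [hLdef, hls]; exact le_csSup (hTbdd σ₀ hσ₀') hlam
    linarith
  set ε' : ℝ := ε / 2 with hε'def
  have hε'0 : 0 < ε' := by positivity
  set t := max (1/2 : ℝ) (L / (L + ε')) with htdef
  have ht0 : 0 < t := lt_of_lt_of_le one_half_pos (le_max_left _ _)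
  have ht1 : t < 1 := by
    apply max_lt (by norm_num)
    rw [div_lt_one (by linarith)]; linarith
  have htL : L / (L + ε') ≤ t := le_max_right _ _
  have h1 : L ≤ t * (L + ε') := by
    rw [div_le_iff₀ (by linarith)] at htL; linarith
  have : Nonempty (Fin n) := ⟨⟨0, hn⟩⟩
  set c := Finset.univ.inf' Finset.univ_nonempty σ₀ with hcdef
  have hc0 : 0 < c := by
    rw [hcdef, Finset.lt_inf'_iff]
    intro i _; exact hσ₀' i
  have hci : ∀ i, c ≤ σ₀ i := fun i => Finset.inf'_le _ (Finset.mem_univ i)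
  refine ⟨(1 - t) * c, mul_pos (by linarith) hc0, ?_⟩
  intro σ hσ hdist
  have hσpos : ∀ i, 0 < σ i := hσ
  have hdi : ∀ i, |σ i - σ₀ i| < (1 - t) * c := by
    intro i
    calc |σ i - σ₀ i| = dist (σ i) (σ₀ i) := (Real.dist_eq _ _).symm
      _ ≤ dist σ σ₀ := dist_le_pi_dist σ σ₀ i
      _ < (1 - t) * c := hdist
  have hc1 : ∀ i, t * σ i < σ₀ i := by
    intro i
    have h := (abs_lt.mp (hdi i)).2
    have hci' := hci i
    have h2 : t * (σ i - σ₀ i) < t * ((1 - t) * c) := mul_lt_mul_of_pos_left h ht0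
    have h1t : 0 < (1 - t) * c := mul_pos (by linarith) hc0
    have h3 : t * ((1 - t) * c) < (1 - t) * c := by nlinarith [h1t, ht1]
    have h4 : (1 - t) * c ≤ (1 - t) * σ₀ i := mul_le_mul_of_nonneg_left hci' (by linarith)
    nlinarith [h2, h3, h4]
  have hc2 : ∀ i, t * σ₀ i < σ i := by
    intro i
    have h := (abs_lt.mp (hdi i)).1
    have hci' := hci i
    nlinarith
  have hA : t * L ≤ lamstar σ := key σ₀ σ hσ₀' hσpos t ht0 ht1 hc1
  have hB : t * lamstar σ ≤ L := key σ σ₀ hσpos hσ₀' t ht0 ht1 hc2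
  -- upper bound: lamstar σ ≤ L + ε'
  have hup : lamstar σ ≤ L + ε' := by
    have h2 : t * lamstar σ ≤ t * (L + ε') := le_trans hB h1
    exact le_of_mul_le_mul_left h2 ht0
  -- lower bound: L - ε' ≤ lamstar σ
  have hlow : L - ε' ≤ lamstar σ := by
    have htε : t * ε' ≤ ε' := by nlinarith
    nlinarith
  rw [Real.dist_eq, abs_lt]
  constructor <;> [linarith; linarith]
end

section
/- Let m ≥ 2 and let g : ℝ^{m−1}_+ → (0,∞) be continuous. Define A = {(λ, λσ_1, …, λσ_{m−1}) : σ ∈ ℝ^{m−1}_+, 0 < λ < g(σ)}, B = {(λ, λσ_1, …, λσ_{m−1}) : σ ∈ ℝ^{m−1}_+, λ > g(σ)}, and Λ* = {(g(σ), g(σ)σ_1, …, g(σ)σ_{m−1}) : σ ∈ ℝ^{m−1}_+}. Then A and B are nonempty, disjoint, open in ℝ^m, and connected, and ℝ^m_+ is the disjoint union of A, Λ*, and B; in particular, A and B are the connected components of ℝ^m_+ \ Λ*. -/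
/-- Let `g : ℝ^{m-1}_+ → (0,∞)` (`m = n + 1 ≥ 2`) be continuous.
The sets `A = {(λ, λσ) : σ ∈ ℝ^{m-1}_+, 0 < λ < g(σ)}`,
`B = {(λ, λσ) : σ ∈ ℝ^{m-1}_+, λ > g(σ)}` and
`Λ* = {(g(σ), g(σ)σ) : σ ∈ ℝ^{m-1}_+}` satisfy: `A` and `B` are nonempty,
disjoint, open in `ℝ^m` and connected; `ℝ^m_+` is the disjoint union of `A`,
`Λ*` and `B`; and `A`, `B` are the connected components of `ℝ^m_+ \ Λ*`. -/
theorem graph_decomposition_of_positive_orthant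
    (n : ℕ) (hn : 1 ≤ n)
    (g : (Fin n → ℝ) → ℝ)
    (hgpos : ∀ σ : Fin n → ℝ, (∀ i, 0 < σ i) → 0 < g σ)
    (hgcont : ContinuousOn g {σ | ∀ i, 0 < σ i})
    (P A B Λstar : Set (Fin (n + 1) → ℝ))
    (hP : P = {v | ∀ i, 0 < v i})
    (hA : A = {v | ∃ σ : Fin n → ℝ, (∀ i, 0 < σ i) ∧ ∃ lam : ℝ,
      0 < lam ∧ lam < g σ ∧ v = Fin.cons lam (fun i => lam * σ i)})
    (hB : B = {v | ∃ σ : Fin n → ℝ, (∀ i, 0 < σ i) ∧ ∃ lam : ℝ,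
      g σ < lam ∧ v = Fin.cons lam (fun i => lam * σ i)})
    (hΛ : Λstar = {v | ∃ σ : Fin n → ℝ, (∀ i, 0 < σ i) ∧
      v = Fin.cons (g σ) (fun i => g σ * σ i)}) :
    A.Nonempty ∧ B.Nonempty ∧ Disjoint A B ∧
    IsOpen A ∧ IsOpen B ∧ IsConnected A ∧ IsConnected B ∧
    P = A ∪ Λstar ∪ B ∧ Disjoint A Λstar ∧ Disjoint B Λstar ∧
    (∀ x ∈ A, connectedComponentIn (P \ Λstar) x = A) ∧
    (∀ x ∈ B, connectedComponentIn (P \ Λstar) x = B) := by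
  classical
  set Q : Set (Fin n → ℝ) := {σ | ∀ i, 0 < σ i} with hQdef
  set sv : (Fin (n + 1) → ℝ) → (Fin n → ℝ) := fun v i => v i.succ / v 0 with hsvdef
  -- positivity of coordinates of a cone point
  have hconsP : ∀ (lam : ℝ) (σ : Fin n → ℝ), 0 < lam → (∀ i, 0 < σ i) →
      ∀ i, 0 < (Fin.cons lam (fun i => lam * σ i) : Fin (n + 1) → ℝ) i := by
    intro lam σ hl hσ i
    refine Fin.cases ?_ ?_ i
    · simpa using hl
    · intro j
      simpa using mul_pos hl (hσ j)
  have hsv_cons : ∀ (lam : ℝ) (σ : Fin n → ℝ), lam ≠ 0 →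
      sv (Fin.cons lam (fun i => lam * σ i)) = σ := by
    intro lam σ hl
    funext i
    simp only [hsvdef, Fin.cons_succ, Fin.cons_zero]
    exact mul_div_cancel_left₀ _ hl
  have hrecon : ∀ v : Fin (n + 1) → ℝ, (∀ i, 0 < v i) →
      v = Fin.cons (v 0) (fun i => v 0 * sv v i) := by
    intro v hv
    funext i
    refine Fin.cases ?_ ?_ i
    · simp
    · intro j
      simp only [hsvdef, Fin.cons_succ]
      rw [mul_comm, div_mul_cancel₀ _ (ne_of_gt (hv 0))]
  -- characterizations
  have hA' : A = {v | (∀ i, 0 < v i) ∧ v 0 < g (sv v)} := by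
    rw [hA]; ext v
    constructor
    · rintro ⟨σ, hσ, lam, hl0, hlt, rfl⟩
      refine ⟨hconsP lam σ hl0 hσ, ?_⟩
      rw [hsv_cons lam σ (ne_of_gt hl0)]
      simpa using hlt
    · rintro ⟨hv, hlt⟩
      exact ⟨sv v, fun i => div_pos (hv _) (hv 0), v 0, hv 0, hlt, hrecon v hv⟩
  have hB' : B = {v | (∀ i, 0 < v i) ∧ g (sv v) < v 0} := by
    rw [hB]; ext v
    constructor
    · rintro ⟨σ, hσ, lam, hlt, rfl⟩
      have hl0 : 0 < lam := (hgpos σ hσ).trans hlt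
      refine ⟨hconsP lam σ hl0 hσ, ?_⟩
      rw [hsv_cons lam σ (ne_of_gt hl0)]
      simpa using hlt
    · rintro ⟨hv, hlt⟩
      exact ⟨sv v, fun i => div_pos (hv _) (hv 0), v 0, hlt, hrecon v hv⟩
  have hΛ' : Λstar = {v | (∀ i, 0 < v i) ∧ v 0 = g (sv v)} := by
    rw [hΛ]; ext v
    constructor
    · rintro ⟨σ, hσ, rfl⟩
      refine ⟨hconsP _ σ (hgpos σ hσ) hσ, ?_⟩
      rw [hsv_cons _ σ (ne_of_gt (hgpos σ hσ))]
      simp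
    · rintro ⟨hv, heq⟩
      refine ⟨sv v, fun i => div_pos (hv _) (hv 0), ?_⟩
      rw [← heq]
      exact hrecon v hv
  -- openness of the orthant
  have hPset : {v : Fin (n + 1) → ℝ | ∀ i, 0 < v i} =
      Set.univ.pi (fun _ => Set.Ioi (0 : ℝ)) := by
    ext v; simp [Set.mem_pi]
  have hPopen : IsOpen {v : Fin (n + 1) → ℝ | ∀ i, 0 < v i} := by
    rw [hPset]
    exact isOpen_set_pi Set.finite_univ (fun _ _ => isOpen_Ioi)
  -- continuity of v ↦ g (sv v) on the orthant
  have hsvcont : ContinuousOn sv {v : Fin (n + 1) → ℝ | ∀ i, 0 < v i} := by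
    rw [continuousOn_pi]
    intro i
    exact ((continuous_apply i.succ).continuousOn).div
      ((continuous_apply (0 : Fin (n + 1))).continuousOn)
      (fun v hv => (hv 0).ne')
  have hsvmaps : Set.MapsTo sv {v : Fin (n + 1) → ℝ | ∀ i, 0 < v i} Q :=
    fun v hv i => div_pos (hv _) (hv 0)
  have hGcont : ContinuousOn (fun v => g (sv v)) {v : Fin (n + 1) → ℝ | ∀ i, 0 < v i} :=
    hgcont.comp hsvcont hsvmaps
  have hAopen : IsOpen A := by
    rw [hA']
    have : {v : Fin (n + 1) → ℝ | (∀ i, 0 < v i) ∧ v 0 < g (sv v)} =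
        {v : Fin (n + 1) → ℝ | ∀ i, 0 < v i} ∩
          (fun v => v 0 - g (sv v)) ⁻¹' Set.Iio 0 := by
      ext v
      simp [sub_neg, and_comm]
    rw [this]
    exact (((continuous_apply (0 : Fin (n + 1))).continuousOn).sub
      hGcont).isOpen_inter_preimage hPopen isOpen_Iio
  have hBopen : IsOpen B := by
    rw [hB']
    have : {v : Fin (n + 1) → ℝ | (∀ i, 0 < v i) ∧ g (sv v) < v 0} =
        {v : Fin (n + 1) → ℝ | ∀ i, 0 < v i} ∩
          (fun v => v 0 - g (sv v)) ⁻¹' Set.Ioi 0 := by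
      ext v
      simp [sub_pos]
    rw [this]
    exact (((continuous_apply (0 : Fin (n + 1))).continuousOn).sub
      hGcont).isOpen_inter_preimage hPopen isOpen_Ioi
  -- nonemptiness
  have hone : ∀ i, (0 : ℝ) < (fun _ : Fin n => (1 : ℝ)) i := fun _ => one_pos
  have hg1 : 0 < g (fun _ => 1) := hgpos _ hone
  have hAne : A.Nonempty := by
    rw [hA]
    exact ⟨_, ⟨fun _ => 1, hone, g (fun _ => 1) / 2, half_pos hg1, half_lt_self hg1, rfl⟩⟩
  have hBne : B.Nonempty := by
    rw [hB]
    exact ⟨_, ⟨fun _ => 1, hone, g (fun _ => 1) + 1, lt_add_one _, rfl⟩⟩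
  -- disjointness
  have hdisjAB : Disjoint A B := by
    rw [hA', hB', Set.disjoint_left]
    rintro v ⟨_, h1⟩ ⟨_, h2⟩
    exact absurd h1 (not_lt.2 h2.le)
  have hdisjAΛ : Disjoint A Λstar := by
    rw [hA', hΛ', Set.disjoint_left]
    rintro v ⟨_, h1⟩ ⟨_, h2⟩
    exact absurd h2 (ne_of_lt h1)
  have hdisjBΛ : Disjoint B Λstar := by
    rw [hB', hΛ', Set.disjoint_left]
    rintro v ⟨_, h1⟩ ⟨_, h2⟩
    exact absurd h2 (ne_of_gt h1)
  -- connectedness of A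
  have hQconv : Convex ℝ Q := by
    have : Q = Set.univ.pi (fun _ => Set.Ioi (0 : ℝ)) := by
      ext σ; simp [hQdef, Set.mem_pi]
    rw [this]
    exact convex_pi (fun i _ => convex_Ioi 0)
  have hQconn : IsConnected Q := hQconv.isConnected ⟨fun _ => 1, hone⟩
  have hAconn : IsConnected A := by
    have hS : IsConnected (Q ×ˢ Set.Ioo (0 : ℝ) 1) :=
      hQconn.prod (isConnected_Ioo one_pos)
    set Fm : (Fin n → ℝ) × ℝ → (Fin (n + 1) → ℝ) :=
      fun p => Fin.cons (p.2 * g p.1) (fun i => p.2 * g p.1 * p.1 i) with hFm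
    have hgfst : ContinuousOn (fun p : (Fin n → ℝ) × ℝ => g p.1) (Q ×ˢ Set.Ioo (0 : ℝ) 1) :=
      hgcont.comp continuousOn_fst (fun p hp => hp.1)
    have hlamc : ContinuousOn (fun p : (Fin n → ℝ) × ℝ => p.2 * g p.1)
        (Q ×ˢ Set.Ioo (0 : ℝ) 1) := continuousOn_snd.mul hgfst
    have hFmcont : ContinuousOn Fm (Q ×ˢ Set.Ioo (0 : ℝ) 1) := by
      rw [continuousOn_pi]
      intro i
      refine Fin.cases ?_ ?_ i
      · simpa [hFm] using hlamc
      · intro j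
        simp only [hFm, Fin.cons_succ]
        exact hlamc.mul ((continuous_apply j).comp continuous_fst).continuousOn
    have himg : Fm '' (Q ×ˢ Set.Ioo (0 : ℝ) 1) = A := by
      rw [hA]
      ext v
      constructor
      · rintro ⟨⟨σ, t⟩, ⟨hσ, ht⟩, rfl⟩
        exact ⟨σ, hσ, t * g σ, mul_pos ht.1 (hgpos σ hσ),
          mul_lt_of_lt_one_left (hgpos σ hσ) ht.2, rfl⟩
      · rintro ⟨σ, hσ, lam, h0, hlt, rfl⟩
        refine ⟨(σ, lam / g σ), ⟨hσ, div_pos h0 (hgpos σ hσ),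
          (div_lt_one (hgpos σ hσ)).2 hlt⟩, ?_⟩
        simp only [hFm]
        rw [div_mul_cancel₀ _ (ne_of_gt (hgpos σ hσ))]
    rw [← himg]
    exact hS.image Fm hFmcont
  -- connectedness of B
  have hBconn : IsConnected B := by
    have hS : IsConnected (Q ×ˢ Set.Ioi (0 : ℝ)) :=
      hQconn.prod (isConnected_Ioi)
    set Fm : (Fin n → ℝ) × ℝ → (Fin (n + 1) → ℝ) :=
      fun p => Fin.cons (g p.1 + p.2) (fun i => (g p.1 + p.2) * p.1 i) with hFm
    have hgfst : ContinuousOn (fun p : (Fin n → ℝ) × ℝ => g p.1) (Q ×ˢ Set.Ioi (0 : ℝ)) :=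
      hgcont.comp continuousOn_fst (fun p hp => hp.1)
    have hlamc : ContinuousOn (fun p : (Fin n → ℝ) × ℝ => g p.1 + p.2)
        (Q ×ˢ Set.Ioi (0 : ℝ)) := hgfst.add continuousOn_snd
    have hFmcont : ContinuousOn Fm (Q ×ˢ Set.Ioi (0 : ℝ)) := by
      rw [continuousOn_pi]
      intro i
      refine Fin.cases ?_ ?_ i
      · simpa [hFm] using hlamc
      · intro j
        simp only [hFm, Fin.cons_succ]
        exact hlamc.mul ((continuous_apply j).comp continuous_fst).continuousOn
    have himg : Fm '' (Q ×ˢ Set.Ioi (0 : ℝ)) = B := by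
      rw [hB]
      ext v
      constructor
      · rintro ⟨⟨σ, t⟩, ⟨hσ, ht⟩, rfl⟩
        exact ⟨σ, hσ, g σ + t, lt_add_of_pos_right _ ht, rfl⟩
      · rintro ⟨σ, hσ, lam, hlt, rfl⟩
        refine ⟨(σ, lam - g σ), ⟨hσ, sub_pos.2 hlt⟩, ?_⟩
        simp only [hFm]
        rw [add_sub_cancel]
    rw [← himg]
    exact hS.image Fm hFmcont
  -- decomposition
  have hPdecomp : P = A ∪ Λstar ∪ B := by
    rw [hP, hA', hB', hΛ']
    ext v
    simp only [Set.mem_union, Set.mem_setOf_eq]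
    constructor
    · intro hv
      rcases lt_trichotomy (v 0) (g (sv v)) with h | h | h
      · exact Or.inl (Or.inl ⟨hv, h⟩)
      · exact Or.inl (Or.inr ⟨hv, h⟩)
      · exact Or.inr ⟨hv, h⟩
    · rintro ((⟨hv, _⟩ | ⟨hv, _⟩) | ⟨hv, _⟩) <;> exact hv
  -- P \ Λstar = A ∪ B
  have hPdiff : P \ Λstar = A ∪ B := by
    rw [hP, hA', hB', hΛ']
    ext v
    simp only [Set.mem_diff, Set.mem_union, Set.mem_setOf_eq]
    constructor
    · rintro ⟨hv, hne⟩
      rcases lt_trichotomy (v 0) (g (sv v)) with h | h | h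
      · exact Or.inl ⟨hv, h⟩
      · exact absurd ⟨hv, h⟩ hne
      · exact Or.inr ⟨hv, h⟩
    · rintro (⟨hv, h⟩ | ⟨hv, h⟩)
      · exact ⟨hv, fun hc => absurd hc.2 (ne_of_lt h)⟩
      · exact ⟨hv, fun hc => absurd hc.2 (ne_of_gt h)⟩
  have hAsub : A ⊆ P \ Λstar := by rw [hPdiff]; exact Set.subset_union_left
  have hBsub : B ⊆ P \ Λstar := by rw [hPdiff]; exact Set.subset_union_right
  refine ⟨hAne, hBne, hdisjAB, hAopen, hBopen, hAconn, hBconn, hPdecomp, hdisjAΛ, hdisjBΛ,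
    ?_, ?_⟩
  · intro x hx
    apply subset_antisymm
    · refine IsPreconnected.subset_left_of_subset_union hAopen hBopen hdisjAB ?_ ?_
        isPreconnected_connectedComponentIn
      · rw [← hPdiff]
        exact connectedComponentIn_subset _ _
      · exact ⟨x, mem_connectedComponentIn (hAsub hx), hx⟩
    · exact hAconn.isPreconnected.subset_connectedComponentIn hx hAsub
  · intro x hx
    apply subset_antisymm
    · refine IsPreconnected.subset_left_of_subset_union hBopen hAopen hdisjAB.symm ?_ ?_
        isPreconnected_connectedComponentIn
      · rw [Set.union_comm, ← hPdiff]
        exact connectedComponentIn_subset _ _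
      · exact ⟨x, mem_connectedComponentIn (hBsub hx), hx⟩
    · exact hBconn.isPreconnected.subset_connectedComponentIn hx hBsub
end
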